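/- arXiv:2309.03091 — 2 statements merged into one kernel-verified Lean document; each statement's English description precedes it below -/
import Mathlib

section
/- Let A_Γ be an Artin group, χ : A_Γ → ℝ a group homomorphism, and let Liv₀ be the full labelled subgraph of Γ induced by the vertices v with χ(v) ≠ 0. Then the assignment v ↦ v for χ(v) ≠ 0 and v ↦ 1 for χ(v) = 0 extends to a group homomorphism ρ : A_Γ → A_{Liv₀}, the assignment v ↦ v on vertices of Liv₀ extends to a group homomorphism ι : A_{Liv₀} → A_Γ, and ρ ∘ ι is the identity of A_{Liv₀} (so ι splits and A_Γ is a semidirect product of ker ρ by A_{Liv₀}). -/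
/-!
A character `χ` to an abelian group sends both sides of an odd braid relation
`⟨u,v⟩^(2k+1) = ⟨v,u⟩^(2k+1)` to `χ(u)^(k+1) χ(v)^k` and `χ(v)^(k+1) χ(u)^k`, so odd edges
join vertices with equal character values. Hence every edge from a living to a dead vertex has
even label, and for even `m` killing one generator turns both sides of the relation into the
same power of the other. So killing the dead vertices respects the Artin relations, and it is
a left inverse of the map induced by the inclusion of the living vertices.
-/

def altWord {V : Type*} (u v : V) : ℕ → FreeGroup V
  | 0 => 1
  | m + 1 => FreeGroup.of u * altWord v u m

structure LabeledGraph (V : Type*) where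
  Adj : V → V → Prop
  symm : ∀ {u v}, Adj u v → Adj v u
  loopless : ∀ v, ¬ Adj v v
  label : V → V → ℕ
  label_symm : ∀ u v, label u v = label v u
  two_le_label : ∀ {u v}, Adj u v → 2 ≤ label u v

def artinRels {V : Type*} (Γ : LabeledGraph V) : Set (FreeGroup V) :=
  {r | ∃ u v : V, Γ.Adj u v ∧
    r = altWord u v (Γ.label u v) * (altWord v u (Γ.label u v))⁻¹}

abbrev ArtinGroup {V : Type*} (Γ : LabeledGraph V) : Type _ :=
  PresentedGroup (artinRels Γ)

def LabeledGraph.induced {V : Type*} (Γ : LabeledGraph V) (S : Set V) :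
    LabeledGraph S where
  Adj u v := Γ.Adj u.1 v.1
  symm h := Γ.symm h
  loopless v := Γ.loopless v.1
  label u v := Γ.label u.1 v.1
  label_symm u v := Γ.label_symm u.1 v.1
  two_le_label h := Γ.two_le_label h

section altProd

variable {G : Type*} [Group G]

def altProd (a b : G) : ℕ → G
  | 0 => 1
  | m + 1 => a * altProd b a m

theorem altProd_two_mul (a b : G) (k : ℕ) : altProd a b (2 * k) = (a * b) ^ k := by
  induction k generalizing a b with
  | zero => rw [mul_zero, pow_zero, altProd]
  | succ k ih =>
    change a * (b * altProd a b (2 * k)) = _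
    rw [ih, pow_succ', mul_assoc]

theorem altProd_two_mul_add_one (a b : G) (k : ℕ) :
    altProd a b (2 * k + 1) = a * (b * a) ^ k := by
  rw [altProd, altProd_two_mul]

theorem map_altProd {H : Type*} [Group H] (φ : G →* H) (a b : G) (m : ℕ) :
    φ (altProd a b m) = altProd (φ a) (φ b) m := by
  induction m generalizing a b with
  | zero => exact φ.map_one
  | succ m ih => rw [altProd, map_mul, ih, altProd]

theorem altProd_comm_of_even {a b : G} (hab : Commute a b) {m : ℕ} (hm : Even m) :
    altProd a b m = altProd b a m := by
  obtain ⟨k, rfl⟩ := hm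
  rw [← two_mul, altProd_two_mul, altProd_two_mul, hab.eq]

end altProd

theorem eq_of_altProd_eq_of_odd {G : Type*} [CommGroup G] {a b : G} {m : ℕ} (hm : Odd m)
    (h : altProd a b m = altProd b a m) : a = b := by
  obtain ⟨k, rfl⟩ := hm
  rwa [altProd_two_mul_add_one, altProd_two_mul_add_one, mul_comm b a, mul_left_inj] at h

theorem map_altWord {V G : Type*} [Group G] (φ : FreeGroup V →* G) (u v : V) (m : ℕ) :
    φ (altWord u v m) = altProd (φ (.of u)) (φ (.of v)) m := by
  induction m generalizing u v with
  | zero => exact φ.map_one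
  | succ m ih => rw [altWord, map_mul, ih, altProd]

namespace ArtinGroup

variable {V : Type*} {Γ : LabeledGraph V}

theorem altProd_of_eq_altProd_of {u v : V} (huv : Γ.Adj u v) :
    altProd (PresentedGroup.of u : ArtinGroup Γ) (PresentedGroup.of v) (Γ.label u v) =
      altProd (PresentedGroup.of v) (PresentedGroup.of u) (Γ.label u v) := by
  have hrel : PresentedGroup.mk (artinRels Γ)
      (altWord u v (Γ.label u v) * (altWord v u (Γ.label u v))⁻¹) = 1 :=
    (QuotientGroup.eq_one_iff _).mpr (Subgroup.subset_normalClosure ⟨u, v, huv, rfl⟩)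
  rwa [map_mul, map_inv, mul_inv_eq_one, map_altWord, map_altWord] at hrel

def lift {G : Type*} [Group G] (f : V → G)
    (hf : ∀ u v, Γ.Adj u v →
      altProd (f u) (f v) (Γ.label u v) = altProd (f v) (f u) (Γ.label u v)) :
    ArtinGroup Γ →* G :=
  PresentedGroup.toGroup (f := f) <| by
    rintro r ⟨u, v, huv, rfl⟩
    rw [map_mul, map_inv, mul_inv_eq_one, map_altWord, map_altWord, FreeGroup.lift_apply_of,
      FreeGroup.lift_apply_of]
    exact hf u v huv

theorem lift_of {G : Type*} [Group G] (f : V → G)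
    (hf : ∀ u v, Γ.Adj u v →
      altProd (f u) (f v) (Γ.label u v) = altProd (f v) (f u) (Γ.label u v))
    (v : V) : lift f hf (PresentedGroup.of v) = f v :=
  PresentedGroup.toGroup.of _

theorem map_of_eq_of_odd {G : Type*} [CommGroup G] (χ : ArtinGroup Γ →* G) {u v : V}
    (huv : Γ.Adj u v) (hodd : Odd (Γ.label u v)) :
    χ (PresentedGroup.of u) = χ (PresentedGroup.of v) :=
  eq_of_altProd_eq_of_odd hodd <| by
    rw [← map_altProd, ← map_altProd, altProd_of_eq_altProd_of huv]

variable (Γ)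

def inclusion (S : Set V) : ArtinGroup (Γ.induced S) →* ArtinGroup Γ :=
  lift (fun w => PresentedGroup.of w.1) fun _ _ huv => altProd_of_eq_altProd_of (Γ := Γ) huv

theorem inclusion_of (S : Set V) (w : S) :
    inclusion Γ S (PresentedGroup.of w) = PresentedGroup.of w.1 :=
  lift_of _ _ w

variable (S : Set V) [DecidablePred (· ∈ S)]
  (hS : ∀ u v, Γ.Adj u v → u ∈ S → v ∉ S → Even (Γ.label u v))

def retraction : ArtinGroup Γ →* ArtinGroup (Γ.induced S) :=
  lift (fun v => if hv : v ∈ S then PresentedGroup.of ⟨v, hv⟩ else 1) <| by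
    intro u v huv
    by_cases hu : u ∈ S <;> by_cases hv : v ∈ S <;> simp only [hu, hv, dite_true, dite_false]
    · exact altProd_of_eq_altProd_of (Γ := Γ.induced S) (u := ⟨u, hu⟩) (v := ⟨v, hv⟩) huv
    · exact altProd_comm_of_even (Commute.one_right _) (hS u v huv hu hv)
    · exact altProd_comm_of_even (Commute.one_left _)
        (Γ.label_symm u v ▸ hS v u (Γ.symm huv) hv hu)

theorem retraction_of_mem {v : V} (hv : v ∈ S) :
    retraction Γ S hS (PresentedGroup.of v) = PresentedGroup.of ⟨v, hv⟩ :=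
  (lift_of _ _ v).trans (dif_pos hv)

theorem retraction_of_notMem {v : V} (hv : v ∉ S) :
    retraction Γ S hS (PresentedGroup.of v) = 1 :=
  (lift_of _ _ v).trans (dif_neg hv)

theorem retraction_comp_inclusion :
    (retraction Γ S hS).comp (inclusion Γ S) = MonoidHom.id _ :=
  PresentedGroup.ext fun w => by
    rw [MonoidHom.comp_apply, inclusion_of, retraction_of_mem Γ S hS w.2, MonoidHom.id_apply]

end ArtinGroup

/-- for a character `χ : A_Γ → ℝ` and the living subgraph `Liv₀`
induced by the vertices `v` with `χ(v) ≠ 0`, the assignment `v ↦ v` (for living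
`v`) and `v ↦ 1` (for dead `v`) extends to a homomorphism `ρ : A_Γ → A_{Liv₀}`,
the assignment `v ↦ v` extends to a homomorphism `ι : A_{Liv₀} → A_Γ`, and
`ρ ∘ ι = id`. -/
theorem statement5 {V : Type*} (Γ : LabeledGraph V)
    (χ : ArtinGroup Γ →* Multiplicative ℝ) :
    ∃ (ρ : ArtinGroup Γ →*
        ArtinGroup (Γ.induced {v : V | χ (PresentedGroup.of v) ≠ 1}))
      (ι : ArtinGroup (Γ.induced {v : V | χ (PresentedGroup.of v) ≠ 1}) →*
        ArtinGroup Γ),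
      (∀ (v : V) (h : χ (PresentedGroup.of v) ≠ 1),
        ρ (PresentedGroup.of v) = PresentedGroup.of ⟨v, h⟩) ∧
      (∀ v : V, χ (PresentedGroup.of v) = 1 → ρ (PresentedGroup.of v) = 1) ∧
      (∀ w : {v : V | χ (PresentedGroup.of v) ≠ 1},
        ι (PresentedGroup.of w) = PresentedGroup.of w.1) ∧
      ρ.comp ι = MonoidHom.id _ := by
  classical
  set Liv : Set V := {v | χ (PresentedGroup.of v) ≠ 1}
  have hLiv : ∀ u v, Γ.Adj u v → u ∈ Liv → v ∉ Liv → Even (Γ.label u v) :=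
    fun u v huv hu hv => Nat.not_odd_iff_even.mp fun hodd =>
      hv <| show χ _ ≠ 1 from ArtinGroup.map_of_eq_of_odd χ huv hodd ▸ hu
  exact ⟨ArtinGroup.retraction Γ Liv hLiv, ArtinGroup.inclusion Γ Liv,
    fun v hv => ArtinGroup.retraction_of_mem Γ Liv hLiv hv,
    fun v hv => ArtinGroup.retraction_of_notMem Γ Liv hLiv (not_not.mpr hv),
    ArtinGroup.inclusion_of Γ Liv, ArtinGroup.retraction_comp_inclusion Γ Liv hLiv⟩
end

section
/- Let F be a field and let R = F[t, t⁻¹] be the ring of Laurent polynomials over F. The kernel of the R-linear map R² → R given by (x, y) ↦ (1 − t)·x + (1 − t⁻¹)·y equals the cyclic submodule generated by (1, t), i.e. { (x, t·x) ∣ x ∈ R }; in particular it is a free R-module of rank 1 and hence an infinite-dimensional F-vector space. -/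
/-!
Since `1 - t⁻¹ = -t⁻¹ (1 - t)`, the map is `(x, y) ↦ (1 - t)(x - t⁻¹ y)`, and `1 - t` is a
non-zero-divisor, so the kernel is `{(x, y) | y = t x}`: the graph of multiplication by `t`.
The graph projects onto the first factor `F[t, t⁻¹]`, which has the infinite `F`-basis
`(tⁿ)_{n ∈ ℤ}`.
-/

open LaurentPolynomial

theorem LaurentPolynomial.T_injective {R : Type*} [Semiring R] [Nontrivial R] :
    Function.Injective (T : ℤ → R[T;T⁻¹]) :=
  AddMonoidAlgebra.single_left_injective one_ne_zero

namespace LinearMap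

variable {R : Type*} [CommRing R]

theorem graph_mulLeft_eq_span_singleton (u : R) :
    (mulLeft R u).graph = Submodule.span R {((1 : R), u)} := by
  ext ⟨x, y⟩
  simp only [mem_graph_iff, mulLeft_apply, Submodule.mem_span_singleton]
  constructor
  · rintro rfl
    exact ⟨x, by simp [mul_comm]⟩
  · rintro ⟨a, ha⟩
    simp only [Prod.smul_mk, smul_eq_mul, mul_one, Prod.mk.injEq] at ha
    simp [← ha.1, ← ha.2, mul_comm]

theorem ker_coprod_mulLeft_one_sub_eq_graph [NoZeroDivisors R] {u v : R} (hvu : v * u = 1)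
    (hu : u ≠ 1) :
    ker (coprod (mulLeft R (1 - u)) (mulLeft R (1 - v))) = (mulLeft R u).graph := by
  ext ⟨x, y⟩
  have hfactor : (1 - u) * x + (1 - v) * y = (1 - u) * (x - v * y) := by
    linear_combination (-y) * hvu
  have hsub : 1 - u ≠ 0 := sub_ne_zero.mpr hu.symm
  simp only [mem_ker, coprod_apply, mem_graph_iff, mulLeft_apply]
  rw [hfactor, mul_eq_zero, or_iff_right hsub]
  constructor
  · intro h
    linear_combination (-u) * h - y * hvu
  · intro h
    linear_combination (-v) * h - x * hvu

end LinearMap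

theorem LinearMap.not_finite_graph {S R M N : Type*} [CommSemiring S] [Semiring R]
    [AddCommMonoid M] [AddCommMonoid N]
    [Module S R] [Module R M] [Module R N] [Module S M] [Module S N] [IsScalarTower S R M]
    [IsScalarTower S R N] (f : M →ₗ[R] N) (hM : ¬ Module.Finite S M) :
    ¬ Module.Finite S f.graph := by
  intro _
  have hsurj : Function.Surjective ((fst S M N).comp (f.graph.subtype.restrictScalars S)) :=
    fun x => ⟨⟨(x, f x), rfl⟩, rfl⟩
  exact hM (Module.Finite.of_surjective _ hsurj)

theorem LaurentPolynomial.not_finite (R : Type*) [Semiring R] [Nontrivial R] :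
    ¬ Module.Finite R R[T;T⁻¹] :=
  Module.not_finite_of_infinite_basis (AddMonoidAlgebra.basis ℤ R)

/-- over `R = F[t,t⁻¹]`, the kernel of the `R`-linear map
`R² → R`, `(x, y) ↦ (1 − t)x + (1 − t⁻¹)y` is the cyclic submodule generated by
`(1, t)`; in particular it is not a finite-dimensional `F`-vector space. -/
theorem statement16 (F : Type*) [Field F] :
    LinearMap.ker
        (LinearMap.coprod
          (LinearMap.mulLeft (LaurentPolynomial F)
            ((1 : LaurentPolynomial F) - T 1))
          (LinearMap.mulLeft (LaurentPolynomial F)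
            ((1 : LaurentPolynomial F) - T (-1)))) =
      Submodule.span (LaurentPolynomial F)
        {((1 : LaurentPolynomial F), (T 1 : LaurentPolynomial F))} ∧
    ¬ Module.Finite F
        (LinearMap.ker
          (LinearMap.coprod
            (LinearMap.mulLeft (LaurentPolynomial F)
              ((1 : LaurentPolynomial F) - T 1))
            (LinearMap.mulLeft (LaurentPolynomial F)
              ((1 : LaurentPolynomial F) - T (-1))))) := by
  have hinv : (T (-1) : F[T;T⁻¹]) * T 1 = 1 := by rw [← T_add, neg_add_cancel, T_zero]
  have hne : (T 1 : F[T;T⁻¹]) ≠ 1 := by rw [← T_zero]; exact T_injective.ne one_ne_zero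
  rw [LinearMap.ker_coprod_mulLeft_one_sub_eq_graph hinv hne]
  exact ⟨LinearMap.graph_mulLeft_eq_span_singleton _,
    LinearMap.not_finite_graph _ (LaurentPolynomial.not_finite F)⟩
end
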